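/- If N = 3 (the dual loop is a triangle with vertices ξ^1, ξ^2, ξ^3 ∈ ℝ³ and values f_1, f_2, f_3 ∈ ℝ), then the force P = (1/2) Σ_K ξ^K × ξ^{K+1} and the total moment T = (1/2) Σ_K (φ^K ξ^{K+1} − φ^{K+1} ξ^K) (with φ^K = ξ^K·x − f_K) satisfy P · T = 0. -/
import Mathlib


open Matrix

/-- For a triangular dual loop (N = 3), the force `P = (1/2) Σ_K ξ^K × ξ^{K+1}` and the
total moment `T = (1/2) Σ_K (φ^K ξ^{K+1} − φ^{K+1} ξ^K)` (with `φ^K = ξ^K·x − f_K`)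
are orthogonal: `P · T = 0`. -/
theorem triangle_force_moment_orthogonal
    (xv : Fin 3 → ℝ) (ξ : ZMod 3 → (Fin 3 → ℝ)) (f : ZMod 3 → ℝ)
    (φ : ZMod 3 → ℝ) (hφ : ∀ K, φ K = ξ K ⬝ᵥ xv - f K)
    (P T : Fin 3 → ℝ)
    (hP : P = (1/2 : ℝ) • ∑ K : ZMod 3, crossProduct (ξ K) (ξ (K+1)))
    (hT : T = (1/2 : ℝ) • ∑ K : ZMod 3, (φ K • ξ (K+1) - φ (K+1) • ξ K)) :
    P ⬝ᵥ T = 0 := by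
  subst hP hT
  have h3 : ∀ g : ZMod 3 → (Fin 3 → ℝ), ∑ K : ZMod 3, g K = g 0 + g 1 + g 2 := by
    intro g
    exact Fin.sum_univ_three g
  rw [h3, h3]
  simp only [hφ, dotProduct, Fin.sum_univ_three, cross_apply, Pi.smul_apply, Pi.add_apply,
    Pi.sub_apply, smul_eq_mul, Matrix.cons_val_zero, Matrix.cons_val_one, Matrix.head_cons,
    Matrix.cons_val_two, Matrix.tail_cons, show (2+1 : ZMod 3) = 0 from rfl]
  ring_nf
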